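/- Let d > 1 be an integer. If d is not divisible by 3, then for every natural number n ≥ 1, d divides o_{n+d} − o_n; if d is divisible by 3, then for every natural number n ≥ 1, d divides o_{n+3d} − o_n. Hence the sequence of octahedral numbers is periodic modulo d with period dividing d if 3 ∤ d, and dividing 3d if 3 ∣ d. -/

import Mathlib

/-- Octahedral numbers: oₙ = n(2n²+1)/3. -/
def oct (n : ℕ) : ℤ := (n : ℤ) * (2 * n ^ 2 + 1) / 3

lemma three_dvd_mul_two_mul_sq_add_one (n : ℤ) : 3 ∣ n * (2 * n ^ 2 + 1) := by
  have hzmod : ∀ a : ZMod 3, a * (2 * a ^ 2 + 1) = 0 := by decide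
  exact (ZMod.intCast_zmod_eq_zero_iff_dvd _ 3).mp (by push_cast; exact hzmod n)

lemma three_mul_oct (n : ℕ) : 3 * oct n = n * (2 * n ^ 2 + 1) :=
  Int.mul_ediv_cancel' (three_dvd_mul_two_mul_sq_add_one n)

lemma three_mul_oct_add_sub_oct (n k : ℕ) :
    3 * (oct (n + k) - oct n) = k * (6 * n ^ 2 + 6 * n * k + 2 * k ^ 2 + 1) := by
  rw [mul_sub, three_mul_oct, three_mul_oct]
  push_cast
  ring

lemma dvd_oct_add_sub_oct_of_not_three_dvd {d : ℕ} (h3 : ¬ 3 ∣ d) (n : ℕ) :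
    (d : ℤ) ∣ oct (n + d) - oct n := by
  have hcop : IsCoprime (d : ℤ) 3 :=
    Nat.isCoprime_iff_coprime.mpr ((Nat.prime_three.coprime_iff_not_dvd.mpr h3).symm)
  exact hcop.dvd_of_dvd_mul_left ⟨_, three_mul_oct_add_sub_oct n d⟩

lemma dvd_oct_add_three_mul_sub_oct (d n : ℕ) : (d : ℤ) ∣ oct (n + 3 * d) - oct n := by
  have h := three_mul_oct_add_sub_oct n (3 * d)
  push_cast at h
  refine ⟨6 * n ^ 2 + 18 * n * d + 18 * d ^ 2 + 1, mul_left_cancel₀ three_ne_zero ?_⟩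
  rw [h]
  ring

theorem octahedral_period_general (d : ℕ) :
    (¬ (3 ∣ d) → ∀ n : ℕ, 1 ≤ n → (d : ℤ) ∣ oct (n + d) - oct n) ∧
    ((3 ∣ d) → ∀ n : ℕ, 1 ≤ n → (d : ℤ) ∣ oct (n + 3 * d) - oct n) :=
  ⟨fun h3 n _ => dvd_oct_add_sub_oct_of_not_three_dvd h3 n,
    fun _ n _ => dvd_oct_add_three_mul_sub_oct d n⟩

/-- For d > 1: if 3 ∤ d then d divides oₙ₊d − oₙ, and if 3 ∣ d then d divides
oₙ₊₃d − oₙ, for all n ≥ 1. -/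
theorem octahedral_period (d : ℕ) (hd : 1 < d) :
    (¬ (3 ∣ d) → ∀ n : ℕ, 1 ≤ n → (d : ℤ) ∣ oct (n + d) - oct n) ∧
    ((3 ∣ d) → ∀ n : ℕ, 1 ≤ n → (d : ℤ) ∣ oct (n + 3 * d) - oct n) :=
  octahedral_period_general d
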